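/- Let M > 1, n ≥ 1 a natural number, and v a real number, and let α be a real number satisfying the cubic equation (M−1)Mnα³ − (M+1)(M−2)nα² − (4n+(M−1)(n−1)v)α + 2n = 0. Then M²·q(α/M) = ψ(α), where q is the quadratic in β with parameters (M, n, v, α) and ψ(α) = P₂(v)α² + P₁(v)α + P₀(v) with P₂(v) = 2M²(M²−1)(n−1)²v² − 2(1+2M−3M³−M⁴+M⁵)(n−1)nv + 2(M−1)²(2M²+M³−1)n², P₁(v) = −(1+M+2M²−6M³+M⁴+M⁵)(n−1)²v² + (3+11M+12M²−16M³−3M⁴+M⁵)(n−1)nv + 2(2−4M−3M²+5M³+M⁴−M⁵)n², and P₀(v) = 2(M⁴+2M³−4M²−2M−1)(n−1)nv − 2(M⁴+2M³−2M²−2M+1)n². -/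

import Mathlib

/-- The cubic `h(α)` from the two-step stochastic stepsize schedule analysis. -/
noncomputable def hcub (M n v α : ℝ) : ℝ :=
  (M - 1) * M * n * α ^ 3 - (M + 1) * (M - 2) * n * α ^ 2
    - (4 * n + (M - 1) * (n - 1) * v) * α + 2 * n

/-- The quadratic `q(β)` (in `β`, with parameters `M, n, v, α`) from the
two-step stochastic stepsize schedule analysis. -/
noncomputable def qquad (M n v α β : ℝ) : ℝ :=
  M * n * ((M - 1) ^ 2 * n + (M + 1) ^ 2 * (n - 1) * v) * ((M - 1) * α + (M + 1)) * β ^ 2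
  + 2 * M * (2 * (M - 1) * M * n * ((n - 1) * v - n) * α ^ 2
      + (M + 1) * ((n - 1) * v - n) * ((3 - M) * n + (M - 1) * (n - 1) * v) * α
      + n * (n - (M - 4) * M * n - (M + 1) * (M + 3) * (n - 1) * v)) * β
  + (-2 * M * (M ^ 2 - 1) * n * ((n - 1) * v - n) * α ^ 2
      + (2 * (2 + M + 2 * M ^ 2 - M ^ 3) * n ^ 2 + (M - 3) * (M + 1) ^ 2 * (n - 1) * n * v
          - (M - 1) * (M + 1) ^ 2 * (n - 1) ^ 2 * v ^ 2) * α
      + 2 * (M + 1) ^ 2 * n * ((n - 1) * v - n))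

/-- The coefficient `P₂(v)` of the auxiliary quadratic `ψ`. -/
noncomputable def P2 (M n v : ℝ) : ℝ :=
  2 * M ^ 2 * (M ^ 2 - 1) * (n - 1) ^ 2 * v ^ 2
    - 2 * (1 + 2 * M - 3 * M ^ 3 - M ^ 4 + M ^ 5) * (n - 1) * n * v
    + 2 * (M - 1) ^ 2 * (2 * M ^ 2 + M ^ 3 - 1) * n ^ 2

/-- The coefficient `P₁(v)` of the auxiliary quadratic `ψ`. -/
noncomputable def P1 (M n v : ℝ) : ℝ :=
  -(1 + M + 2 * M ^ 2 - 6 * M ^ 3 + M ^ 4 + M ^ 5) * (n - 1) ^ 2 * v ^ 2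
    + (3 + 11 * M + 12 * M ^ 2 - 16 * M ^ 3 - 3 * M ^ 4 + M ^ 5) * (n - 1) * n * v
    + 2 * (2 - 4 * M - 3 * M ^ 2 + 5 * M ^ 3 + M ^ 4 - M ^ 5) * n ^ 2

/-- The coefficient `P₀(v)` of the auxiliary quadratic `ψ`. -/
noncomputable def P0 (M n v : ℝ) : ℝ :=
  2 * (M ^ 4 + 2 * M ^ 3 - 4 * M ^ 2 - 2 * M - 1) * (n - 1) * n * v
    - 2 * (M ^ 4 + 2 * M ^ 3 - 2 * M ^ 2 - 2 * M + 1) * n ^ 2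

/-- The auxiliary quadratic `ψ(α) = P₂(v)α² + P₁(v)α + P₀(v)`. -/
noncomputable def psi (M n v α : ℝ) : ℝ :=
  P2 M n v * α ^ 2 + P1 M n v * α + P0 M n v

lemma clear_div (M A B C α : ℝ) (hM : M ≠ 0) :
    M ^ 2 * (A * (α / M) ^ 2 + B * (α / M) + C) = A * α ^ 2 + M * B * α + M ^ 2 * C := by
  field_simp

theorem stmt_6 (M : ℝ) (n : ℕ) (v : ℝ)
    (hM : 1 < M) (hn : 1 ≤ n)
    (α : ℝ) (hroot : hcub M (n : ℝ) v α = 0) :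
    M ^ 2 * qquad M (n : ℝ) v α (α / M) = psi M (n : ℝ) v α := by
  have hM0 : M ≠ 0 := by positivity
  unfold qquad psi P2 P1 P0
  unfold hcub at hroot
  rw [clear_div _ _ _ _ _ hM0]
  linear_combination ((M - 1) ^ 2 * (n : ℝ) + (M + 1) ^ 2 * ((n : ℝ) - 1) * v
    + 4 * M ^ 2 * (((n : ℝ) - 1) * v - (n : ℝ))) * hroot
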